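/- If f : [0,∞) → ℝ is continuous with f(0)=0, f(u)=o(u) as u→0⁺, the map u ↦ f(u)/u is nondecreasing on (0,∞), and f(u)u ≥ θF(u) > 0 for all u>0 with some θ>2 (where F(u)=∫₀ᵘ f), then for every c>0 there exists a>0 with f(a)/a = c. -/
import Mathlib


open Set MeasureTheory intervalIntegral

/-- If `f : [0,∞) → ℝ` is continuous with `f 0 = 0`, `f(u) = o(u)` as `u → 0⁺`,
`u ↦ f u / u` is nondecreasing on `(0,∞)`, and `0 < θ F(u) ≤ f(u) u` for all `u > 0`
with some `θ > 2`, then `u ↦ f u / u` attains every positive value. -/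
theorem stmt0 (f : ℝ → ℝ) (θ : ℝ)
    (hf_cont : ContinuousOn f (Ici 0))
    (hf0 : f 0 = 0)
    (hf_small : Filter.Tendsto (fun u => f u / u) (nhdsWithin 0 (Ioi 0)) (nhds 0))
    (hf_mono : ∀ u v : ℝ, 0 < u → u ≤ v → f u / u ≤ f v / v)
    (hθ : 2 < θ)
    (hAR : ∀ u : ℝ, 0 < u →
      0 < θ * (∫ s in (0:ℝ)..u, f s) ∧ θ * (∫ s in (0:ℝ)..u, f s) ≤ f u * u) :
    ∀ c : ℝ, 0 < c → ∃ a : ℝ, 0 < a ∧ f a / a = c := by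
  have hθ0 : (0:ℝ) < θ := by linarith
  have hint : ∀ a b : ℝ, 0 ≤ a → a ≤ b → IntervalIntegrable f volume a b := by
    intro a b ha hab
    apply (hf_cont.mono ?_).intervalIntegrable
    rw [uIcc_of_le hab]
    intro x hx; exact le_trans ha hx.1
  -- lower bound for F on [t, u]
  have hF : ∀ t u : ℝ, 0 < t → t ≤ u →
      f t / t * ((u^2 - t^2)/2) ≤ (∫ s in (0:ℝ)..u, f s) := by
    intro t u ht htu
    have hI1 : IntervalIntegrable f volume 0 t := hint 0 t le_rfl ht.le
    have hI2 : IntervalIntegrable f volume t u := hint t u ht.le htu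
    have hsplit := integral_add_adjacent_intervals hI1 hI2
    have hFt : 0 < (∫ s in (0:ℝ)..t, f s) := by
      have h := (hAR t ht).1; nlinarith
    have hmono : (∫ s in t..u, (f t / t) * s) ≤ ∫ s in t..u, f s := by
      apply integral_mono_on htu ?_ hI2
      · intro x hx
        have hx0 : 0 < x := lt_of_lt_of_le ht hx.1
        have h := hf_mono t x ht hx.1
        have hfx : f x / x * x = f x := div_mul_cancel₀ _ hx0.ne'
        nlinarith
      · exact (continuous_const.mul continuous_id).intervalIntegrable t u
    have hval : (∫ s in t..u, (f t / t) * s) = f t / t * ((u^2 - t^2)/2) := by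
      rw [intervalIntegral.integral_const_mul, integral_id]
    rw [hval] at hmono
    linarith
  -- key contraction lemma
  have key : ∀ B : ℝ, (∀ u : ℝ, 0 < u → f u / u ≤ B) →
      ∀ t : ℝ, 0 < t → f t / t ≤ 2 / θ * B := by
    intro B hB t ht
    have hev : ∀ᶠ u in Filter.atTop, f t / t * (1 - t^2/u^2) ≤ 2 / θ * B := by
      filter_upwards [Filter.eventually_ge_atTop (t+1)] with u hu
      have hu0 : 0 < u := by linarith
      have htu : t ≤ u := by linarith
      have h1 := hF t u ht htu
      have h2 := (hAR u hu0).2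
      have hBu := hB u hu0
      have hu2 : (0:ℝ) < u^2 := by positivity
      have hfu : f u / u * u = f u := div_mul_cancel₀ _ hu0.ne'
      have h3 : f u * u ≤ B * u^2 := by nlinarith
      have h4 : θ * (f t / t * ((u^2 - t^2)/2)) ≤ B * u^2 := by nlinarith
      have e : f t / t * (1 - t^2/u^2) = (f t / t * ((u^2 - t^2)/2)) * 2 / u^2 := by
        field_simp
      have e2 : 2 / θ * B = 2 * B / θ := by ring
      rw [e, e2, div_le_div_iff₀ hu2 hθ0]
      nlinarith
    have htend : Filter.Tendsto (fun u => f t / t * (1 - t^2/u^2)) Filter.atTop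
        (nhds (f t / t)) := by
      have h1 : Filter.Tendsto (fun u : ℝ => t^2/u^2) Filter.atTop (nhds 0) :=
        Filter.Tendsto.div_atTop tendsto_const_nhds (Filter.tendsto_pow_atTop two_ne_zero)
      have h2 : Filter.Tendsto (fun u : ℝ => f t / t * (1 - t^2/u^2)) Filter.atTop
          (nhds (f t / t * (1 - 0))) :=
        (((tendsto_const_nhds (x := (1:ℝ)))).sub h1).const_mul _
      simpa using h2
    exact le_of_tendsto htend hev
  intro c hc
  -- g 1 > 0
  have hg1 : 0 < f 1 / 1 := by
    have h1 := (hAR 1 one_pos).1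
    have h2 := (hAR 1 one_pos).2
    simp only [div_one]
    nlinarith
  -- find large point where g ≥ c
  have hbig : ∃ U : ℝ, 0 < U ∧ c ≤ f U / U := by
    by_contra hcon
    push_neg at hcon
    have hiter : ∀ n : ℕ, ∀ u : ℝ, 0 < u → f u / u ≤ (2/θ)^n * c := by
      intro n
      induction n with
      | zero => intro u hu; simpa using (hcon u hu).le
      | succ k ih =>
        intro u hu
        have := key ((2/θ)^k * c) ih u hu
        calc f u / u ≤ 2/θ * ((2/θ)^k * c) := this
          _ = (2/θ)^(k+1) * c := by ring
    have hlim : Filter.Tendsto (fun n : ℕ => (2/θ)^n * c) Filter.atTop (nhds 0) := by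
      have h := tendsto_pow_atTop_nhds_zero_of_lt_one (by positivity : (0:ℝ) ≤ 2/θ)
        ((div_lt_one hθ0).2 hθ)
      simpa using h.mul_const c
    have := (hlim.eventually_lt_const hg1).exists
    obtain ⟨n, hn⟩ := this
    exact absurd (hiter n 1 one_pos) (by linarith)
  obtain ⟨U, hU0, hUc⟩ := hbig
  -- find small point where g ≤ c
  have hsmall : ∃ ε : ℝ, 0 < ε ∧ ε ≤ U ∧ f ε / ε ≤ c := by
    have hev : ∀ᶠ u in nhdsWithin 0 (Ioi 0), f u / u < c :=
      hf_small.eventually_lt_const hc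
    have hmem : ∀ᶠ u in nhdsWithin (0:ℝ) (Ioi 0), u ∈ Ioi (0:ℝ) :=
      eventually_mem_nhdsWithin
    have hlt : ∀ᶠ u in nhdsWithin (0:ℝ) (Ioi 0), u < U := by
      have : Filter.Tendsto (fun u : ℝ => u) (nhdsWithin 0 (Ioi 0)) (nhds 0) :=
        Filter.tendsto_id.mono_left nhdsWithin_le_nhds
      exact this.eventually_lt_const hU0
    obtain ⟨ε, h1, h2, h3⟩ := (hev.and (hmem.and hlt)).exists
    exact ⟨ε, h2, h3.le, h1.le⟩
  obtain ⟨ε, hε0, hεU, hεc⟩ := hsmall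
  -- IVT on [ε, U]
  have hgcont : ContinuousOn (fun u => f u / u) (Icc ε U) := by
    apply ContinuousOn.div (hf_cont.mono ?_) continuousOn_id
    · intro x hx; exact (lt_of_lt_of_le hε0 hx.1).ne'
    · intro x hx; exact le_of_lt (lt_of_lt_of_le hε0 hx.1)
  have := intermediate_value_Icc hεU hgcont (⟨hεc, hUc⟩ : c ∈ Icc (f ε / ε) (f U / U))
  obtain ⟨a, ha, hga⟩ := this
  exact ⟨a, lt_of_lt_of_le hε0 ha.1, hga⟩
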